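/- arXiv:2201.09212 — 7 statements merged into one kernel-verified Lean document; each statement's English description precedes it below -/
import Mathlib

section
/- Let B be a real m×p matrix and c ∈ ℝᵖ. Suppose that for every real k > 0 there is a vector x(k) ∈ ℝᵐ satisfying x(k)ᵀBBᵀx(k) + k⁻¹‖x(k)‖² + x(k)ᵀBc ≤ 0. Then k⁻¹x(k) → 0 as k → ∞ (indeed ‖k⁻¹x(k)‖ ≤ ‖c‖/(2√k) for all k > 0). -/
/-!
With `y = Bᵀx` the hypothesis reads `‖y‖² + k⁻¹‖x‖² + ⟪y, c⟫ ≤ 0`. Completing the square,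
`‖y‖² + ⟪y, c⟫ ≥ -‖c‖²/4`, so `k⁻¹‖x‖² ≤ ‖c‖²/4`, which is `‖k⁻¹x‖ ≤ ‖c‖/(2√k)`.
-/

open Matrix WithLp

namespace Matrix

variable {m p : Type*} [Fintype m] [Fintype p]

theorem dotProduct_mulVec_eq_inner_transpose_mulVec (B : Matrix m p ℝ) (x : EuclideanSpace ℝ m)
    (c : EuclideanSpace ℝ p) : x ⬝ᵥ (B *ᵥ c) = inner ℝ (toLp 2 (Bᵀ *ᵥ x)) c := by
  rw [EuclideanSpace.inner_eq_star_dotProduct, star_trivial, ofLp_toLp, dotProduct_mulVec,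
    ← mulVec_transpose, dotProduct_comm]

theorem dotProduct_mul_transpose_mulVec_self_eq_norm_sq (B : Matrix m p ℝ)
    (x : EuclideanSpace ℝ m) : x ⬝ᵥ ((B * Bᵀ) *ᵥ x) = ‖toLp 2 (Bᵀ *ᵥ x)‖ ^ 2 := by
  rw [← mulVec_mulVec, ← real_inner_self_eq_norm_sq, ← ofLp_toLp 2 (Bᵀ *ᵥ x),
    dotProduct_mulVec_eq_inner_transpose_mulVec, ofLp_toLp]

end Matrix

theorem neg_norm_sq_div_four_le_norm_sq_add_inner {E : Type*} [SeminormedAddCommGroup E]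
    [InnerProductSpace ℝ E] (y c : E) : -(‖c‖ ^ 2 / 4) ≤ ‖y‖ ^ 2 + inner ℝ y c := by
  nlinarith [neg_le_of_abs_le (abs_real_inner_le_norm y c), sq_nonneg (‖y‖ - ‖c‖ / 2)]

theorem norm_inv_smul_le_div_sqrt {E : Type*} [SeminormedAddCommGroup E] [NormedSpace ℝ E]
    {k a : ℝ} (hk : 0 < k) (ha : 0 ≤ a) {z : E} (h : k⁻¹ * ‖z‖ ^ 2 ≤ a ^ 2) :
    ‖k⁻¹ • z‖ ≤ a / √k := by
  have hsq : ‖k⁻¹ • z‖ ^ 2 ≤ (a / √k) ^ 2 := by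
    rw [norm_smul, Real.norm_of_nonneg (inv_nonneg.2 hk.le), div_pow, Real.sq_sqrt hk.le, mul_pow,
      sq, mul_assoc, div_eq_inv_mul]
    exact mul_le_mul_of_nonneg_left h (inv_nonneg.2 hk.le)
  exact (sq_le_sq₀ (norm_nonneg _) (by positivity)).1 hsq

/-- **Analytic core of Proposition 2.** If for every `k > 0` the vector `x k` satisfies the
dissipativity inequality `xᵀBBᵀx + k⁻¹‖x‖² + xᵀBc ≤ 0`, then `‖k⁻¹ • x k‖ ≤ ‖c‖/(2√k)`,
and hence `k⁻¹ • x k → 0` as `k → ∞`. -/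
theorem perturbation_vanishes {m p : ℕ}
    (B : Matrix (Fin m) (Fin p) ℝ) (c : EuclideanSpace ℝ (Fin p))
    (x : ℝ → EuclideanSpace ℝ (Fin m))
    (hx : ∀ k : ℝ, 0 < k →
      (x k) ⬝ᵥ ((B * Bᵀ) *ᵥ (x k)) + k⁻¹ * ‖x k‖ ^ 2 + (x k) ⬝ᵥ (B *ᵥ c) ≤ 0) :
    (∀ k : ℝ, 0 < k → ‖k⁻¹ • x k‖ ≤ ‖c‖ / (2 * Real.sqrt k)) ∧
      Filter.Tendsto (fun k : ℝ => k⁻¹ • x k) Filter.atTop (nhds 0) := by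
  have bound : ∀ k : ℝ, 0 < k → ‖k⁻¹ • x k‖ ≤ ‖c‖ / (2 * Real.sqrt k) := by
    intro k hk
    have hdiss := hx k hk
    rw [dotProduct_mul_transpose_mulVec_self_eq_norm_sq,
      dotProduct_mulVec_eq_inner_transpose_mulVec] at hdiss
    have hsquare := neg_norm_sq_div_four_le_norm_sq_add_inner (toLp 2 (Bᵀ *ᵥ x k)) c
    rw [← div_div]
    exact norm_inv_smul_le_div_sqrt hk (by positivity) (by linarith)
  have hlim : Filter.Tendsto (fun k : ℝ => ‖c‖ / (2 * Real.sqrt k)) Filter.atTop (nhds 0) :=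
    tendsto_const_nhds.div_atTop (Real.tendsto_sqrt_atTop.const_mul_atTop two_pos)
  exact ⟨bound, squeeze_zero_norm' ((Filter.eventually_gt_atTop 0).mono bound) hlim⟩
end

section
/- Let N ≥ 1 and let W be a 3N×3N real diagonal matrix. For a node index i ∈ {1,…,N}, let P_i be the 3×3N matrix selecting the three coordinates of node i, and suppose the three diagonal entries of W on node i's coordinates are all equal to w̄_i. Consider contact Jacobian rows of the two forms: (S-contact on node i) J = R·P_i, and (D-contact on nodes i ≠ j, with the three diagonal entries of W on node j's coordinates all equal to w̄_j) J = R·(P_i − P_j), where R is a 3×3 real orthogonal matrix (RRᵀ = I₃). Then: for an S-contact, J·W·Jᵀ = w̄_i·I₃; for a D-contact, J·W·Jᵀ = (w̄_i + w̄_j)·I₃; and for two contacts J_m, J_l involving disjoint sets of nodes, J_m·W·J_lᵀ = 0. Consequently the surrogate Delassus operator Γ_c = J_c W J_cᵀ of a stack of such contacts on pairwise disjoint nodes is block diagonal with blocks γ_m·I₃. -/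
open Matrix

/-- Selector matrix picking out the three Cartesian coordinates of node `i`
out of `N` nodes (so `selP N i` is the `3 × 3N` matrix `P_i`). -/
def selP (N : ℕ) (i : Fin N) : Matrix (Fin 3) (Fin N × Fin 3) ℝ :=
  fun a q => if q = (i, a) then 1 else 0

lemma selP_key (N : ℕ) (d : Fin N × Fin 3 → ℝ) (i j : Fin N) :
    selP N i * Matrix.diagonal d * (selP N j)ᵀ =
      if i = j then Matrix.diagonal (fun a => d (i, a)) else 0 := by
  ext a b
  simp only [Matrix.mul_apply, Matrix.mul_diagonal, selP, transpose_apply, ite_mul,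
    zero_mul, mul_ite, mul_one, mul_zero, Finset.sum_ite_eq', Finset.mem_univ, if_true]
  by_cases h : i = j <;> by_cases hab : a = b <;>
    simp [h, hab, Matrix.diagonal_apply, Prod.ext_iff, eq_comm]

lemma selP_same (N : ℕ) (d : Fin N × Fin 3 → ℝ) (i : Fin N) (w : ℝ)
    (hw : ∀ a, d (i, a) = w) :
    selP N i * Matrix.diagonal d * (selP N i)ᵀ = w • (1 : Matrix (Fin 3) (Fin 3) ℝ) := by
  rw [selP_key, if_pos rfl]
  ext a b
  by_cases hab : a = b <;> simp [Matrix.diagonal_apply, Matrix.one_apply, hab, hw]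

lemma selP_ne (N : ℕ) (d : Fin N × Fin 3 → ℝ) (i j : Fin N) (h : i ≠ j) :
    selP N i * Matrix.diagonal d * (selP N j)ᵀ = 0 := by
  rw [selP_key, if_neg h]

/-- **Proposition 3 (contact diagonalization).** With a diagonal surrogate matrix `W`
assigning a common weight to the three coordinates of each contacting node, the block
`J W Jᵀ` of an S-contact `J = R P_i` is `w̄_i I₃`, that of a D-contact `J = R (P_i − P_j)`
is `(w̄_i + w̄_j) I₃`, cross blocks of contacts on disjoint nodes vanish, and hence the
surrogate Delassus operator of the stacked Jacobian is diagonal with blocks `γ_m I₃`. -/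
theorem contact_diagonalization {N K : ℕ} (hN : 1 ≤ N)
    (d : Fin N × Fin 3 → ℝ)
    (W : Matrix (Fin N × Fin 3) (Fin N × Fin 3) ℝ) (hW : W = Matrix.diagonal d)
    (R : Fin K → Matrix (Fin 3) (Fin 3) ℝ) (hR : ∀ m, R m * (R m)ᵀ = 1)
    (nodes : Fin K → Finset (Fin N))
    (hdisj : ∀ m l, m ≠ l → Disjoint (nodes m) (nodes l))
    (J : Fin K → Matrix (Fin 3) (Fin N × Fin 3) ℝ) (γ : Fin K → ℝ)
    (hJ : ∀ m,
      (∃ i w, nodes m = {i} ∧ (∀ a, d (i, a) = w) ∧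
        J m = R m * selP N i ∧ γ m = w) ∨
      (∃ i j wi wj, i ≠ j ∧ nodes m = {i, j} ∧
        (∀ a, d (i, a) = wi) ∧ (∀ a, d (j, a) = wj) ∧
        J m = R m * (selP N i - selP N j) ∧ γ m = wi + wj))
    (Jc : Matrix (Fin K × Fin 3) (Fin N × Fin 3) ℝ)
    (hJc : ∀ m a, Jc (m, a) = J m a) :
    (∀ m, J m * W * (J m)ᵀ = γ m • (1 : Matrix (Fin 3) (Fin 3) ℝ)) ∧
    (∀ m l, m ≠ l → J m * W * (J l)ᵀ = 0) ∧
    Jc * W * Jcᵀ = Matrix.diagonal (fun q : Fin K × Fin 3 => γ q.1) := by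
  subst hW
  -- diagonal blocks
  have hdiag : ∀ m, J m * (Matrix.diagonal d) * (J m)ᵀ =
      γ m • (1 : Matrix (Fin 3) (Fin 3) ℝ) := by
    intro m
    rcases hJ m with ⟨i, w, _, hw, hJm, hγ⟩ | ⟨i, j, wi, wj, hij, _, hwi, hwj, hJm, hγ⟩
    · rw [hJm, hγ, Matrix.transpose_mul]
      calc R m * selP N i * Matrix.diagonal d * ((selP N i)ᵀ * (R m)ᵀ)
          = R m * (selP N i * Matrix.diagonal d * (selP N i)ᵀ) * (R m)ᵀ := by
            simp only [Matrix.mul_assoc]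
        _ = w • (1 : Matrix (Fin 3) (Fin 3) ℝ) := by
            rw [selP_same N d i w hw, Matrix.mul_smul, Matrix.mul_one,
              Matrix.smul_mul, hR m]
    · rw [hJm, hγ, Matrix.transpose_mul]
      have : (selP N i - selP N j) * Matrix.diagonal d * (selP N i - selP N j)ᵀ =
          (wi + wj) • (1 : Matrix (Fin 3) (Fin 3) ℝ) := by
        simp only [Matrix.transpose_sub, Matrix.sub_mul, Matrix.mul_sub]
        rw [selP_same N d i wi hwi, selP_same N d j wj hwj,
          selP_ne N d i j hij, selP_ne N d j i hij.symm, add_smul]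
        abel
      calc R m * (selP N i - selP N j) * Matrix.diagonal d *
            ((selP N i - selP N j)ᵀ * (R m)ᵀ)
          = R m * ((selP N i - selP N j) * Matrix.diagonal d *
              (selP N i - selP N j)ᵀ) * (R m)ᵀ := by simp only [Matrix.mul_assoc]
        _ = (wi + wj) • (1 : Matrix (Fin 3) (Fin 3) ℝ) := by
            rw [this, Matrix.mul_smul, Matrix.mul_one, Matrix.smul_mul, hR m]
  -- off-diagonal blocks
  have hoff : ∀ m l, m ≠ l → J m * (Matrix.diagonal d) * (J l)ᵀ = 0 := by
    intro m l hml
    have hd := hdisj m l hml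
    -- node indices of m are not node indices of l
    have hnot : ∀ i ∈ nodes m, ∀ j ∈ nodes l, i ≠ j := by
      intro i hi j hj hij
      exact (Finset.disjoint_left.mp hd hi) (hij ▸ hj)
    rcases hJ m with ⟨i, w, hnm, hw, hJm, _⟩ | ⟨i, j, wi, wj, hij, hnm, hwi, hwj, hJm, _⟩ <;>
    rcases hJ l with ⟨i', w', hnl, hw', hJl, _⟩ | ⟨i', j', wi', wj', hij', hnl, hwi', hwj', hJl, _⟩ <;>
    · rw [hJm, hJl, Matrix.transpose_mul]
      simp only [hnm, hnl, Finset.mem_singleton, Finset.mem_insert] at hnot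
      first
      | (have h1 : i ≠ i' := hnot i rfl i' rfl
         calc R m * selP N i * Matrix.diagonal d * ((selP N i')ᵀ * (R l)ᵀ)
             = R m * (selP N i * Matrix.diagonal d * (selP N i')ᵀ) * (R l)ᵀ := by
               simp only [Matrix.mul_assoc]
           _ = 0 := by rw [selP_ne N d i i' h1]; simp)
      | (have h1 : i ≠ i' := hnot i rfl i' (Or.inl rfl)
         have h2 : i ≠ j' := hnot i rfl j' (Or.inr rfl)
         calc R m * selP N i * Matrix.diagonal d * ((selP N i' - selP N j')ᵀ * (R l)ᵀ)
             = R m * (selP N i * Matrix.diagonal d * (selP N i' - selP N j')ᵀ) * (R l)ᵀ := by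
               simp only [Matrix.mul_assoc]
           _ = 0 := by
               simp only [Matrix.transpose_sub, Matrix.mul_sub, Matrix.sub_mul]
               rw [selP_ne N d i i' h1, selP_ne N d i j' h2]; simp)
      | (have h1 : i ≠ i' := hnot i (Or.inl rfl) i' rfl
         have h2 : j ≠ i' := hnot j (Or.inr rfl) i' rfl
         calc R m * (selP N i - selP N j) * Matrix.diagonal d * ((selP N i')ᵀ * (R l)ᵀ)
             = R m * ((selP N i - selP N j) * Matrix.diagonal d * (selP N i')ᵀ) * (R l)ᵀ := by
               simp only [Matrix.mul_assoc]
           _ = 0 := by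
               simp only [Matrix.transpose_sub, Matrix.mul_sub, Matrix.sub_mul]
               rw [selP_ne N d i i' h1, selP_ne N d j i' h2]; simp)
      | (have h1 : i ≠ i' := hnot i (Or.inl rfl) i' (Or.inl rfl)
         have h2 : i ≠ j' := hnot i (Or.inl rfl) j' (Or.inr rfl)
         have h3 : j ≠ i' := hnot j (Or.inr rfl) i' (Or.inl rfl)
         have h4 : j ≠ j' := hnot j (Or.inr rfl) j' (Or.inr rfl)
         calc R m * (selP N i - selP N j) * Matrix.diagonal d *
              ((selP N i' - selP N j')ᵀ * (R l)ᵀ)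
             = R m * ((selP N i - selP N j) * Matrix.diagonal d *
                 (selP N i' - selP N j')ᵀ) * (R l)ᵀ := by simp only [Matrix.mul_assoc]
           _ = 0 := by
               simp only [Matrix.transpose_sub, Matrix.mul_sub, Matrix.sub_mul]
               rw [selP_ne N d i i' h1, selP_ne N d i j' h2, selP_ne N d j i' h3,
                 selP_ne N d j j' h4]; simp)
  refine ⟨hdiag, hoff, ?_⟩
  have hblock : ∀ (m l : Fin K) (a b : Fin 3),
      (Jc * Matrix.diagonal d * Jcᵀ) (m, a) (l, b) =
        (J m * Matrix.diagonal d * (J l)ᵀ) a b := by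
    intro m l a b
    simp only [Matrix.mul_apply, transpose_apply, hJc]
  ext ⟨m, a⟩ ⟨l, b⟩
  rw [hblock]
  by_cases hml : m = l
  · subst hml
    rw [hdiag m]
    by_cases hab : a = b <;>
      simp [hab, Matrix.one_apply, Matrix.diagonal_apply, Prod.ext_iff]
  · rw [hoff m l hml]
    simp [Matrix.diagonal_apply, Prod.ext_iff, hml]
end

section
/- Let μ > 0, γ > 0, η = (ηₙ, ηₜ) ∈ ℝ × ℝ², and φₙ ∈ ℝ. Define λ* = (λ*ₙ, λ*ₜ) = −γ⁻¹(ηₙ + φₙ, ηₜ), and define the strict operator output λ = (λₙ, λₜ) by λₙ = max(λ*ₙ, 0) and λₜ = λ*ₜ if ‖λ*ₜ‖ ≤ μλₙ, λₜ = μλₙ·λ*ₜ/‖λ*ₜ‖ otherwise. Then λ is the unique element of ℝ × ℝ² satisfying the Signorini–Coulomb condition with diagonal Delassus operator γI₃: (i) λₙ ≥ 0, γλₙ + ηₙ + φₙ ≥ 0, and λₙ·(γλₙ + ηₙ + φₙ) = 0; (ii) μλₙ − ‖λₜ‖ ≥ 0, and there exists δ ≥ 0 with δ·(μλₙ − ‖λₜ‖)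 = 0 and δ·λₜ + μλₙ·(γλₜ + ηₜ) = 0. -/
private lemma aux_normal (γ c ln : ℝ) (hγ : 0 < γ) (h1 : 0 ≤ ln)
    (h2 : 0 ≤ γ * ln + c) (h3 : ln * (γ * ln + c) = 0) :
    ln = max (-(γ⁻¹ * c)) 0 := by
  rcases mul_eq_zero.mp h3 with h | h
  · subst h
    have hc : 0 ≤ c := by linarith
    have : -(γ⁻¹ * c) ≤ 0 := by
      have := mul_nonneg (le_of_lt (inv_pos.mpr hγ)) hc; linarith
    rw [max_eq_right this]
  · have hln : ln = -(γ⁻¹ * c) := by field_simp; linarith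
    rw [hln, max_eq_left (hln ▸ h1)]

/-- **Proposition 4.** The strict operator output (clamp the normal component at `0`, then
project the tangential component onto the disc of radius `μλₙ`) is the unique solution of
the Signorini–Coulomb condition with diagonal Delassus operator `γ I₃`. -/
theorem strict_operator_solves_scc (μ γ : ℝ) (hμ : 0 < μ) (hγ : 0 < γ)
    (ηn φn : ℝ) (ηt : EuclideanSpace ℝ (Fin 2))
    (lamn : ℝ) (lamt : EuclideanSpace ℝ (Fin 2))
    (hlamn : lamn = max (-(γ⁻¹ * (ηn + φn))) 0)
    (hlamt : lamt = if ‖(-γ⁻¹) • ηt‖ ≤ μ * lamn then (-γ⁻¹) • ηt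
      else (μ * lamn / ‖(-γ⁻¹) • ηt‖) • ((-γ⁻¹) • ηt)) :
    (0 ≤ lamn ∧ 0 ≤ γ * lamn + ηn + φn ∧ lamn * (γ * lamn + ηn + φn) = 0 ∧
      0 ≤ μ * lamn - ‖lamt‖ ∧
      ∃ δ : ℝ, 0 ≤ δ ∧ δ * (μ * lamn - ‖lamt‖) = 0 ∧
        δ • lamt + (μ * lamn) • (γ • lamt + ηt) = 0) ∧
    (∀ (ln : ℝ) (lt : EuclideanSpace ℝ (Fin 2)),
      (0 ≤ ln ∧ 0 ≤ γ * ln + ηn + φn ∧ ln * (γ * ln + ηn + φn) = 0 ∧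
        0 ≤ μ * ln - ‖lt‖ ∧
        ∃ δ : ℝ, 0 ≤ δ ∧ δ * (μ * ln - ‖lt‖) = 0 ∧
          δ • lt + (μ * ln) • (γ • lt + ηt) = 0) →
      ln = lamn ∧ lt = lamt) := by
  set w : EuclideanSpace ℝ (Fin 2) := (-γ⁻¹) • ηt with hw
  have hηt : ηt = (-γ) • w := by
    rw [hw, smul_smul, neg_mul_neg, mul_inv_cancel₀ hγ.ne', one_smul]
  set m : ℝ := μ * lamn with hmdef
  -- normal component facts
  have h1 : 0 ≤ lamn := by rw [hlamn]; exact le_max_right _ _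
  have h2 : 0 ≤ γ * lamn + ηn + φn := by
    rcases le_total (-(γ⁻¹ * (ηn + φn))) 0 with h | h
    · rw [hlamn, max_eq_right h]
      have : 0 ≤ γ⁻¹ * (ηn + φn) := by linarith
      nlinarith [inv_pos.mpr hγ]
    · rw [hlamn, max_eq_left h]
      have : γ * -(γ⁻¹ * (ηn + φn)) = -(ηn + φn) := by field_simp
      linarith [this]
  have h3 : lamn * (γ * lamn + ηn + φn) = 0 := by
    rcases le_total (-(γ⁻¹ * (ηn + φn))) 0 with h | h
    · rw [hlamn, max_eq_right h]; ring
    · have : lamn = -(γ⁻¹ * (ηn + φn)) := by rw [hlamn, max_eq_left h]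
      have hγl : γ * lamn = -(ηn + φn) := by rw [this]; field_simp
      rw [hγl]; ring
  have hm : 0 ≤ m := mul_nonneg hμ.le h1
  -- tangential existence
  have hmain : 0 ≤ m - ‖lamt‖ ∧ ∃ δ : ℝ, 0 ≤ δ ∧ δ * (m - ‖lamt‖) = 0 ∧
      δ • lamt + m • (γ • lamt + ηt) = 0 := by
    by_cases h : ‖w‖ ≤ m
    · rw [if_pos h] at hlamt
      refine ⟨by rw [hlamt]; linarith, 0, le_refl 0, by ring, ?_⟩
      have : γ • lamt + ηt = 0 := by
        rw [hlamt, hηt]; module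
      rw [this, zero_smul, smul_zero, add_zero]
    · push_neg at h
      rw [if_neg (not_le.mpr h)] at hlamt
      have hwpos : 0 < ‖w‖ := lt_of_le_of_lt hm h
      have hnt : ‖lamt‖ = m := by
        rw [hlamt, norm_smul, Real.norm_eq_abs,
          abs_of_nonneg (div_nonneg hm hwpos.le), div_mul_cancel₀ _ hwpos.ne']
      refine ⟨by rw [hnt]; simp, γ * (‖w‖ - m), by nlinarith, by rw [hnt]; ring, ?_⟩
      rw [hlamt, hηt]
      have key : (γ * (‖w‖ - m)) • ((m / ‖w‖) • w) +
          m • (γ • ((m / ‖w‖) • w) + (-γ) • w) =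
          (γ * (‖w‖ - m) * (m / ‖w‖) + m * (γ * (m / ‖w‖) + -γ)) • w := by
        module
      rw [key]
      have : γ * (‖w‖ - m) * (m / ‖w‖) + m * (γ * (m / ‖w‖) + -γ) = 0 := by
        field_simp; ring
      rw [this, zero_smul]
  refine ⟨⟨h1, h2, h3, hmain.1, hmain.2⟩, ?_⟩
  -- uniqueness
  rintro ln lt ⟨g1, g2, g3, g4, δ, hδ, hcomp, heq⟩
  have hln : ln = lamn := by
    rw [hlamn]
    have := aux_normal γ (ηn + φn) ln hγ g1 (by linarith) (by linarith [g3]; )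
    · exact this
  subst hln
  refine ⟨rfl, ?_⟩
  rcases hm.lt_or_eq with hmpos | hmzero
  · -- m > 0
    have hs : 0 < δ + m * γ := by positivity
    have hlt : (δ + m * γ) • lt = (m * γ) • w := by
      have h' : (δ + m * γ) • lt - (m * γ) • w = 0 := by
        rw [← heq, hηt]; module
      exact sub_eq_zero.mp h'
    have hlt2 : lt = ((m * γ) / (δ + m * γ)) • w := by
      rw [div_eq_inv_mul, ← smul_smul, ← hlt, inv_smul_smul₀ hs.ne']
    have hnlt : ‖lt‖ = (m * γ) / (δ + m * γ) * ‖w‖ := by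
      rw [hlt2, norm_smul, Real.norm_eq_abs,
        abs_of_nonneg (div_nonneg (by positivity) hs.le)]
    have hkey : ‖lt‖ * (δ + m * γ) = m * γ * ‖w‖ := by
      rw [hnlt]; field_simp
    by_cases h : ‖w‖ ≤ m
    · rw [if_pos h] at hlamt
      rw [hlamt]
      rcases hδ.lt_or_eq with hδpos | hδ0
      · exfalso
        have hle : ‖lt‖ = m := by
          rcases mul_eq_zero.mp hcomp with h0 | h0
          · exact absurd h0.symm hδpos.ne
          · rw [hmdef]; linarith
        nlinarith [hkey, hle, mul_nonneg (mul_nonneg hm hγ.le) (sub_nonneg.mpr h),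
          mul_pos hmpos hδpos]
      · rw [hlt2, ← hδ0, zero_add, div_self (by positivity : (m*γ) ≠ 0), one_smul]
    · push_neg at h
      rw [if_neg (not_le.mpr h)] at hlamt
      have hwpos : 0 < ‖w‖ := lt_of_le_of_lt hm h
      have hδpos : 0 < δ := by
        rcases hδ.lt_or_eq with hp | h0
        · exact hp
        · exfalso
          have hlw : lt = w := by
            rw [hlt2, ← h0, zero_add, div_self (by positivity : (m*γ) ≠ 0), one_smul]
          rw [hmdef] at h; rw [hlw] at g4; linarith
      have hle : ‖lt‖ = m := by
        rcases mul_eq_zero.mp hcomp with h0 | h0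
        · exact absurd h0.symm hδpos.ne
        · rw [hmdef]; linarith
      have hcoef : (m * γ) / (δ + m * γ) = m / ‖w‖ := by
        rw [div_eq_div_iff hs.ne' hwpos.ne']
        rw [hle] at hkey; linarith
      rw [hlamt, hlt2, hcoef]
  · -- m = 0
    have hlt0 : lt = 0 := by
      have : ‖lt‖ ≤ 0 := by linarith [g4, hmzero, hmdef]
      simpa [norm_le_zero_iff] using this
    rw [hlt0]
    by_cases h : ‖w‖ ≤ m
    · rw [if_pos h] at hlamt
      have : ‖w‖ ≤ 0 := by rw [hmzero]; exact h
      have : w = 0 := by simpa [norm_le_zero_iff] using this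
      rw [hlamt, this]
    · rw [if_neg h] at hlamt
      rw [hlamt, ← hmzero, zero_div, zero_smul]
end

section
/- Let μ > 0, γ > 0, η = (ηₙ, ηₜ) ∈ ℝ × ℝ², φₙ ∈ ℝ, and C_μ = {(λₙ, λₜ) ∈ ℝ × ℝ² : λₙ ≥ 0 and ‖λₜ‖ ≤ μλₙ}. Define the strict operator output λ̂ = (λ̂ₙ, λ̂ₜ) by λ̂ₙ = max(−γ⁻¹(ηₙ + φₙ), 0), λ*ₜ = −γ⁻¹ηₜ, and λ̂ₜ = λ*ₜ if ‖λ*ₜ‖ ≤ μλ̂ₙ, λ̂ₜ = μλ̂ₙ·λ*ₜ/‖λ*ₜ‖ otherwise. Then λ̂ is the unique minimizer of the maximal-dissipation objective λ ↦ ½γ‖λ‖² + λᵀ(η + (φₙ, 0)) over the set {λ = (λₙ, λₜ) ∈ C_μ : λₙ ≥ 0, γλₙ + ηₙ + φₙ ≥ 0, and λₙ·(γλₙ + ηₙ + φₙ) = 0}. -/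
/-!
On the Signorini set the normal component is forced: `0 ≤ λₙ ⊥ γλₙ + ηₙ + φₙ ≥ 0` has the
single solution `λ̂ₙ = max (-γ⁻¹(ηₙ + φₙ)) 0`, so the feasible set is `{λ̂ₙ} × closedBall 0 (μλ̂ₙ)`.
Completing the square, the objective restricted to it is `γ/2 ‖λₜ - λ*ₜ‖²` plus a constant,
and `λ̂ₜ` is the radial projection of `λ*ₜ` onto the ball. That projection satisfies the
variational inequality `⟪λ*ₜ - λ̂ₜ, t - λ̂ₜ⟫ ≤ 0` on the ball, which makes it the strict
nearest point.
-/

open RealInnerProductSpace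

section InnerProductSpace

variable {E : Type*} [NormedAddCommGroup E] [InnerProductSpace ℝ E]

theorem norm_sub_sq_lt_of_inner_sub_nonpos {s p t : E} (hvi : ⟪s - p, t - p⟫ ≤ 0)
    (hne : t ≠ p) : ‖p - s‖ ^ 2 < ‖t - s‖ ^ 2 := by
  have hpos : 0 < ‖t - p‖ ^ 2 := by
    have := norm_pos_iff.mpr (sub_ne_zero.mpr hne)
    positivity
  have hsplit : t - s = (t - p) - (s - p) := by abel
  rw [hsplit, norm_sub_sq_real (t - p), ← norm_neg (p - s), neg_sub, real_inner_comm]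
  linarith

noncomputable def projClosedBall (r : ℝ) (s : E) : E :=
  if ‖s‖ ≤ r then s else (r / ‖s‖) • s

theorem norm_projClosedBall_le {r : ℝ} (hr : 0 ≤ r) (s : E) : ‖projClosedBall r s‖ ≤ r := by
  unfold projClosedBall
  split_ifs with h
  · exact h
  · have hs : 0 < ‖s‖ := hr.trans_lt (not_le.mp h)
    rw [norm_smul, Real.norm_eq_abs, abs_div, abs_of_nonneg hr, abs_of_pos hs,
      div_mul_cancel₀ _ hs.ne']

theorem inner_sub_projClosedBall_nonpos {r : ℝ} (s : E) {t : E} (ht : ‖t‖ ≤ r) :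
    ⟪s - projClosedBall r s, t - projClosedBall r s⟫ ≤ 0 := by
  unfold projClosedBall
  split_ifs with h
  · simp
  · have hs : 0 < ‖s‖ := (norm_nonneg t).trans_lt (ht.trans_lt (not_le.mp h))
    have hcoef : 0 ≤ 1 - r / ‖s‖ := by
      rw [sub_nonneg, div_le_one hs]; exact (not_le.mp h).le
    have hsub : s - (r / ‖s‖) • s = (1 - r / ‖s‖) • s := by rw [sub_smul, one_smul]
    have hinner : ⟪s, t - (r / ‖s‖) • s⟫ = ⟪s, t⟫ - ‖s‖ * r := by
      rw [inner_sub_right, real_inner_smul_right, real_inner_self_eq_norm_sq]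
      field_simp
    have hcs : ⟪s, t⟫ ≤ ‖s‖ * r :=
      (real_inner_le_norm s t).trans (mul_le_mul_of_nonneg_left ht hs.le)
    rw [hsub, real_inner_smul_left, hinner]
    exact mul_nonpos_of_nonneg_of_nonpos hcoef (sub_nonpos.mpr hcs)

theorem norm_projClosedBall_sub_sq_lt {r : ℝ} (s : E) {t : E} (ht : ‖t‖ ≤ r)
    (hne : t ≠ projClosedBall r s) : ‖projClosedBall r s - s‖ ^ 2 < ‖t - s‖ ^ 2 :=
  norm_sub_sq_lt_of_inner_sub_nonpos (inner_sub_projClosedBall_nonpos s ht) hne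

theorem half_mul_norm_sq_add_inner_eq {γ : ℝ} (hγ : γ ≠ 0) (t η : E) :
    1 / 2 * γ * ‖t‖ ^ 2 + ⟪t, η⟫ =
      1 / 2 * γ * (‖t - (-γ⁻¹) • η‖ ^ 2 - ‖(-γ⁻¹) • η‖ ^ 2) := by
  rw [norm_sub_sq_real, real_inner_smul_right]
  field_simp
  ring

end InnerProductSpace

theorem signorini_iff_eq_max {γ a x : ℝ} (hγ : 0 < γ) :
    (0 ≤ x ∧ 0 ≤ γ * x + a ∧ x * (γ * x + a) = 0) ↔ x = max (-(γ⁻¹ * a)) 0 := by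
  have hroot : γ * x + a = 0 ↔ x = -(γ⁻¹ * a) := by
    constructor <;> intro h
    · field_simp; linarith
    · rw [h]; field_simp; ring
  constructor
  · rintro ⟨hx, hslack, hcompl⟩
    rcases mul_eq_zero.mp hcompl with rfl | hzero
    · have ha : 0 ≤ a := by simpa using hslack
      exact (max_eq_right (neg_nonpos.mpr (by positivity))).symm
    · rw [hroot.mp hzero] at hx ⊢
      exact (max_eq_left hx).symm
  · rintro rfl
    rcases le_total 0 (-(γ⁻¹ * a)) with h | h
    · have hzero : γ * max (-(γ⁻¹ * a)) 0 + a = 0 := hroot.mpr (max_eq_left h)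
      exact ⟨le_max_right _ _, hzero.ge, by rw [hzero, mul_zero]⟩
    · have ha : 0 ≤ a := (mul_nonneg_iff_of_pos_left (inv_pos.mpr hγ)).mp (neg_nonpos.mp h)
      rw [max_eq_right h]
      simpa using ha

/-- **Proposition 6 (isotropic case).** The strict operator output is the unique minimizer
of the maximal-dissipation objective `½γ‖λ‖² + λᵀ(η + φ)` over the friction cone
intersected with the normal Signorini complementarity constraint. -/
theorem strict_operator_is_mdp (μ γ : ℝ) (hμ : 0 < μ) (hγ : 0 < γ)
    (ηn φn : ℝ) (ηt : EuclideanSpace ℝ (Fin 2))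
    (lamn : ℝ) (lamtstar lamt : EuclideanSpace ℝ (Fin 2))
    (hlamn : lamn = max (-(γ⁻¹ * (ηn + φn))) 0)
    (hstar : lamtstar = (-γ⁻¹) • ηt)
    (hlamt : lamt = if ‖lamtstar‖ ≤ μ * lamn then lamtstar
      else (μ * lamn / ‖lamtstar‖) • lamtstar)
    (D : Set (ℝ × EuclideanSpace ℝ (Fin 2)))
    (hD : D = {p | (0 ≤ p.1 ∧ ‖p.2‖ ≤ μ * p.1) ∧
      0 ≤ γ * p.1 + ηn + φn ∧ p.1 * (γ * p.1 + ηn + φn) = 0})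
    (g : ℝ × EuclideanSpace ℝ (Fin 2) → ℝ)
    (hg : ∀ p, g p = (1/2) * γ * (p.1 ^ 2 + ‖p.2‖ ^ 2) + p.1 * (ηn + φn) + ⟪p.2, ηt⟫) :
    (lamn, lamt) ∈ D ∧ ∀ p ∈ D, p ≠ (lamn, lamt) → g (lamn, lamt) < g p := by
  have hsig : ∀ x, (0 ≤ x ∧ 0 ≤ γ * x + ηn + φn ∧ x * (γ * x + ηn + φn) = 0) ↔ x = lamn := by
    intro x
    simp only [add_assoc, hlamn]
    exact signorini_iff_eq_max hγ
  have hmem : ∀ p, p ∈ D ↔ p.1 = lamn ∧ ‖p.2‖ ≤ μ * lamn := by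
    rintro ⟨x, t⟩
    rw [hD, Set.mem_ofPred_eq]
    constructor
    · rintro ⟨⟨hx, ht⟩, hslack⟩
      obtain rfl := (hsig x).1 ⟨hx, hslack⟩
      exact ⟨rfl, ht⟩
    · rintro ⟨rfl, ht⟩
      obtain ⟨hx, hslack⟩ := (hsig x).2 rfl
      exact ⟨⟨hx, ht⟩, hslack⟩
  have hr : 0 ≤ μ * lamn := mul_nonneg hμ.le (hlamn ▸ le_max_right _ _)
  have hproj : lamt = projClosedBall (μ * lamn) lamtstar := hlamt
  refine ⟨(hmem _).2 ⟨rfl, hproj ▸ norm_projClosedBall_le hr _⟩, ?_⟩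
  rintro ⟨x, t⟩ hp hne
  obtain ⟨rfl, ht⟩ := (hmem _).1 hp
  have htne : t ≠ lamt := fun h => hne (by rw [h])
  have hclose : ‖lamt - lamtstar‖ ^ 2 < ‖t - lamtstar‖ ^ 2 := by
    rw [hproj] at htne ⊢
    exact norm_projClosedBall_sub_sq_lt lamtstar ht htne
  have hsq := half_mul_norm_sq_add_inner_eq hγ.ne' (η := ηt)
  rw [hstar] at hclose
  rw [hg, hg]
  linarith [hsq t, hsq lamt, mul_lt_mul_of_pos_left hclose hγ]
end

section
/- Let μ > 0. The strict operator T: ℝ × ℝ² → ℝ × ℝ² defined by T(xₙ, xₜ) = (max(xₙ, 0), p(μ·max(xₙ, 0), xₜ)), where p(r, x) = x if ‖x‖ ≤ r and p(r, x) = (r/‖x‖)·x otherwise, is Lipschitz continuous; in particular ‖T(x) − T(y)‖ ≤ (1 + μ)·‖x − y‖ for all x, y ∈ ℝ × ℝ² (with the Euclidean norm on ℝ × ℝ² ≅ ℝ³). -/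
/-!
The tangential stage is the radial retraction onto a closed disc, i.e. the metric projection onto a
closed convex set, so it is nonexpansive in its argument; writing it as `(min ‖x‖ r / ‖x‖) • x` shows
that it is also 1-Lipschitz in the radius. The radius `μ · max xₙ 0` moves by at most `μ |xₙ - yₙ|`,
so the tangential part of `T x - T y` has norm at most `μ a + b`, where `a = |xₙ - yₙ|` and
`b = ‖xₜ - yₜ‖`, while the normal part has absolute value at most `a`. Finally
`a² + (μ a + b)² ≤ (1 + μ)² (a² + b²)`.
-/

open scoped RealInnerProductSpace

section RadialRetraction

variable {F : Type*} [NormedAddCommGroup F] [NormedSpace ℝ F]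

noncomputable def radialRetraction (r : ℝ) (x : F) : F :=
  if ‖x‖ ≤ r then x else (r / ‖x‖) • x

theorem radialRetraction_eq_smul (r : ℝ) (x : F) :
    radialRetraction r x = (min ‖x‖ r / ‖x‖) • x := by
  rcases le_or_gt ‖x‖ r with hx | hx
  · rcases eq_or_ne x 0 with rfl | hx0
    · simp [radialRetraction]
    · rw [radialRetraction, if_pos hx, min_eq_left hx, div_self (norm_ne_zero_iff.2 hx0),
        one_smul]
  · rw [radialRetraction, if_neg hx.not_ge, min_eq_right hx.le]

theorem norm_radialRetraction_le {r : ℝ} (hr : 0 ≤ r) (x : F) : ‖radialRetraction r x‖ ≤ r := by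
  rw [radialRetraction]
  split_ifs with hx
  · exact hx
  · have hx0 : 0 < ‖x‖ := hr.trans_lt (not_le.1 hx)
    rw [norm_smul, Real.norm_of_nonneg (div_nonneg hr hx0.le), div_mul_cancel₀ r hx0.ne']

theorem norm_radialRetraction_sub_radialRetraction_le_abs (r s : ℝ) (x : F) :
    ‖radialRetraction r x - radialRetraction s x‖ ≤ |r - s| := by
  have hmin : |min ‖x‖ r - min ‖x‖ s| ≤ |r - s| := by
    simpa using abs_min_sub_min_le_max ‖x‖ r ‖x‖ s
  rcases eq_or_ne x 0 with rfl | hx0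
  · simp [radialRetraction_eq_smul]
  · rw [radialRetraction_eq_smul, radialRetraction_eq_smul, ← sub_smul, ← sub_div, norm_smul,
      norm_div, norm_norm, div_mul_cancel₀ _ (norm_ne_zero_iff.2 hx0), Real.norm_eq_abs]
    exact hmin

end RadialRetraction

section InnerProductSpace

variable {F : Type*} [NormedAddCommGroup F] [InnerProductSpace ℝ F]

theorem norm_sub_le_of_inner_sub_le_zero {K : Set F} {P : F → F} (hPK : ∀ x, P x ∈ K)
    (hP : ∀ x, ∀ w ∈ K, ⟪x - P x, w - P x⟫ ≤ 0) (x y : F) :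
    ‖P x - P y‖ ≤ ‖x - y‖ := by
  have hsum : ⟪x - P x, P y - P x⟫ + ⟪y - P y, P x - P y⟫ ≤ 0 :=
    add_nonpos (hP x _ (hPK y)) (hP y _ (hPK x))
  have hsq : ‖P x - P y‖ ^ 2 ≤ ‖x - y‖ * ‖P x - P y‖ := by
    calc ‖P x - P y‖ ^ 2 = ⟪P x - P y, P x - P y⟫ := (real_inner_self_eq_norm_sq _).symm
      _ ≤ ⟪x - y, P x - P y⟫ := by
          have : ⟪x - P x, P y - P x⟫ + ⟪y - P y, P x - P y⟫ =
              ⟪P x - P y, P x - P y⟫ - ⟪x - y, P x - P y⟫ := by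
            rw [← neg_sub (P x) (P y), inner_neg_right, neg_add_eq_sub, ← inner_sub_left,
              ← inner_sub_left]
            congr 1
            abel
          linarith
      _ ≤ ‖x - y‖ * ‖P x - P y‖ := real_inner_le_norm _ _
  nlinarith [norm_nonneg (P x - P y), norm_nonneg (x - y)]

theorem inner_sub_radialRetraction_nonpos {r : ℝ} (x : F) {w : F} (hw : ‖w‖ ≤ r) :
    ⟪x - radialRetraction r x, w - radialRetraction r x⟫ ≤ 0 := by
  rw [radialRetraction]
  split_ifs with hx
  · simp
  · have hx0 : 0 < ‖x‖ := (norm_nonneg w).trans_lt (hw.trans_lt (not_le.1 hx))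
    have hxw : ⟪x, w⟫ ≤ ‖x‖ * r :=
      (real_inner_le_norm x w).trans (mul_le_mul_of_nonneg_left hw hx0.le)
    have hc : 0 ≤ 1 - r / ‖x‖ := sub_nonneg.2 ((div_le_one hx0).2 (not_le.1 hx).le)
    have hx_sub : x - (r / ‖x‖) • x = (1 - r / ‖x‖) • x := by rw [sub_smul, one_smul]
    have hnorm : r / ‖x‖ * ‖x‖ ^ 2 = ‖x‖ * r := by field_simp
    rw [hx_sub, inner_smul_left, inner_sub_right, inner_smul_right, real_inner_self_eq_norm_sq,
      hnorm, RCLike.conj_to_real]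
    exact mul_nonpos_of_nonneg_of_nonpos hc (sub_nonpos.2 hxw)

theorem norm_radialRetraction_sub_le {r : ℝ} (hr : 0 ≤ r) (x y : F) :
    ‖radialRetraction r x - radialRetraction r y‖ ≤ ‖x - y‖ :=
  norm_sub_le_of_inner_sub_le_zero (K := Metric.closedBall 0 r)
    (fun x ↦ mem_closedBall_zero_iff.2 (norm_radialRetraction_le hr x))
    (fun x _ hw ↦ inner_sub_radialRetraction_nonpos x (mem_closedBall_zero_iff.1 hw)) x y

theorem norm_radialRetraction_sub_le_abs_add {r s : ℝ} (hs : 0 ≤ s) (x y : F) :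
    ‖radialRetraction r x - radialRetraction s y‖ ≤ |r - s| + ‖x - y‖ :=
  (norm_sub_le_norm_sub_add_norm_sub _ (radialRetraction s x) _).trans
    (add_le_add (norm_radialRetraction_sub_radialRetraction_le_abs r s x)
      (norm_radialRetraction_sub_le hs x y))

end InnerProductSpace

theorem sqrt_sq_add_sq_le_one_add_mul_sqrt {μ a b c d : ℝ} (hμ : 0 ≤ μ) (hc : |c| ≤ a)
    (hd : |d| ≤ μ * a + b) : √(c ^ 2 + d ^ 2) ≤ (1 + μ) * √(a ^ 2 + b ^ 2) := by
  have hc2 : c ^ 2 ≤ a ^ 2 := sq_le_sq' (abs_le.1 hc).1 (abs_le.1 hc).2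
  have hd2 : d ^ 2 ≤ (μ * a + b) ^ 2 := sq_le_sq' (abs_le.1 hd).1 (abs_le.1 hd).2
  -- `(1 + μ)² (a² + b²) - a² - (μ a + b)² = 2 μ (a² - a b + b²) + μ² b²`
  have hsq : c ^ 2 + d ^ 2 ≤ (1 + μ) ^ 2 * (a ^ 2 + b ^ 2) := by
    nlinarith [mul_nonneg hμ (sq_nonneg (a - b)), mul_nonneg hμ (sq_nonneg a),
      mul_nonneg hμ (sq_nonneg b), sq_nonneg (μ * b)]
  calc √(c ^ 2 + d ^ 2) ≤ √((1 + μ) ^ 2 * (a ^ 2 + b ^ 2)) := Real.sqrt_le_sqrt hsq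
    _ = (1 + μ) * √(a ^ 2 + b ^ 2) := by
      rw [Real.sqrt_mul (sq_nonneg _), Real.sqrt_sq (by linarith)]

/-- **Lemma 2.** The strict operator (clamp the normal component at `0`, then project the
tangential component onto the disc of radius `μ` times the clamped normal component) is
Lipschitz continuous with constant `1 + μ` for the Euclidean norm on `ℝ × ℝ² ≅ ℝ³`. -/
theorem strict_operator_lipschitz (μ : ℝ) (hμ : 0 < μ)
    (p : ℝ → EuclideanSpace ℝ (Fin 2) → EuclideanSpace ℝ (Fin 2))
    (hp : ∀ r x, p r x = if ‖x‖ ≤ r then x else (r / ‖x‖) • x)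
    (T : ℝ × EuclideanSpace ℝ (Fin 2) → ℝ × EuclideanSpace ℝ (Fin 2))
    (hT : ∀ xn xt, T (xn, xt) = (max xn 0, p (μ * max xn 0) xt)) :
    ∀ x y : ℝ × EuclideanSpace ℝ (Fin 2),
      Real.sqrt (((T x).1 - (T y).1) ^ 2 + ‖(T x).2 - (T y).2‖ ^ 2) ≤
        (1 + μ) * Real.sqrt ((x.1 - y.1) ^ 2 + ‖x.2 - y.2‖ ^ 2) := by
  obtain rfl : p = radialRetraction := funext₂ hp
  rintro ⟨xn, xt⟩ ⟨yn, yt⟩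
  rw [hT, hT, ← sq_abs (xn - yn)]
  have hnormal : |max xn 0 - max yn 0| ≤ |xn - yn| := abs_max_sub_max_le_abs xn yn 0
  have hradius : |μ * max xn 0 - μ * max yn 0| ≤ μ * |xn - yn| := by
    rw [← mul_sub, abs_mul, abs_of_pos hμ]
    exact mul_le_mul_of_nonneg_left hnormal hμ.le
  have htangent : |‖radialRetraction (μ * max xn 0) xt - radialRetraction (μ * max yn 0) yt‖| ≤
      μ * |xn - yn| + ‖xt - yt‖ := by
    rw [abs_norm]
    exact (norm_radialRetraction_sub_le_abs_add (by positivity) xt yt).trans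
      (add_le_add_left hradius _)
  exact sqrt_sq_add_sq_le_one_add_mul_sqrt hμ.le hnormal htangent
end

section
/- Let E be a real inner product space and define, for r ≥ 0 and x ∈ E, the radial projection p(r, x) = x if ‖x‖ ≤ r and p(r, x) = (r/‖x‖)·x otherwise (i.e., the metric projection of x onto the closed ball of radius r centered at the origin). Then for all r₁, r₂ ≥ 0 and x₁, x₂ ∈ E: ‖p(r₁, x₁) − p(r₂, x₂)‖ ≤ |r₁ − r₂| + ‖x₁ − x₂‖. -/
open RealInnerProductSpace

private lemma radial_var_ineq {E : Type*} [NormedAddCommGroup E] [InnerProductSpace ℝ E]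
    (r : ℝ) (hr : 0 ≤ r) (x y : E) (hy : ‖y‖ ≤ r) :
    ⟪x - (if ‖x‖ ≤ r then x else (r / ‖x‖) • x),
      y - (if ‖x‖ ≤ r then x else (r / ‖x‖) • x)⟫ ≤ 0 := by
  split_ifs with h
  · simp
  · push_neg at h
    have hx : (0:ℝ) < ‖x‖ := lt_of_le_of_lt hr h
    have hx0 : x ≠ 0 := by simpa [norm_pos_iff] using hx
    have hsub : x - (r / ‖x‖) • x = (1 - r / ‖x‖) • x := by
      rw [sub_smul, one_smul]
    rw [hsub, real_inner_smul_left, inner_sub_right, real_inner_smul_right,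
      real_inner_self_eq_norm_sq]
    have hc : r / ‖x‖ ≤ 1 := by
      rw [div_le_one hx]; exact h.le
    have h1 : (0:ℝ) ≤ 1 - r / ‖x‖ := by linarith
    have h2 : ⟪x, y⟫ - r / ‖x‖ * ‖x‖ ^ 2 ≤ 0 := by
      have := real_inner_le_norm x y
      have hxy : ⟪x, y⟫ ≤ ‖x‖ * r := le_trans this (by nlinarith)
      have : r / ‖x‖ * ‖x‖ ^ 2 = r * ‖x‖ := by field_simp
      nlinarith
    nlinarith

private lemma radial_nonexp {E : Type*} [NormedAddCommGroup E] [InnerProductSpace ℝ E]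
    (r : ℝ) (hr : 0 ≤ r) (x₁ x₂ : E) :
    ‖(if ‖x₁‖ ≤ r then x₁ else (r / ‖x₁‖) • x₁) -
      (if ‖x₂‖ ≤ r then x₂ else (r / ‖x₂‖) • x₂)‖ ≤ ‖x₁ - x₂‖ := by
  set a := if ‖x₁‖ ≤ r then x₁ else (r / ‖x₁‖) • x₁ with ha
  set b := if ‖x₂‖ ≤ r then x₂ else (r / ‖x₂‖) • x₂ with hb
  have hna : ‖a‖ ≤ r := by
    rw [ha]; split_ifs with h
    · exact h
    · push_neg at h
      have hx : (0:ℝ) < ‖x₁‖ := lt_of_le_of_lt hr h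
      rw [norm_smul, Real.norm_eq_abs, abs_div, abs_of_nonneg hr,
        abs_of_pos hx, div_mul_cancel₀ _ hx.ne']
  have hnb : ‖b‖ ≤ r := by
    rw [hb]; split_ifs with h
    · exact h
    · push_neg at h
      have hx : (0:ℝ) < ‖x₂‖ := lt_of_le_of_lt hr h
      rw [norm_smul, Real.norm_eq_abs, abs_div, abs_of_nonneg hr,
        abs_of_pos hx, div_mul_cancel₀ _ hx.ne']
  have h1 : ⟪x₁ - a, b - a⟫ ≤ 0 := radial_var_ineq r hr x₁ b hnb
  have h2 : ⟪x₂ - b, a - b⟫ ≤ 0 := radial_var_ineq r hr x₂ a hna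
  have key : ⟪a - b, a - b⟫ ≤ ⟪a - b, x₁ - x₂⟫ := by
    have e1 : ⟪x₁ - a, b - a⟫ = -⟪x₁ - a, a - b⟫ := by
      rw [← inner_neg_right]; congr 1; abel
    rw [e1] at h1
    have h1' : 0 ≤ ⟪x₁ - a, a - b⟫ := by linarith
    have : ⟪a - b, x₁ - x₂⟫ - ⟪a - b, a - b⟫ = ⟪x₁ - a, a - b⟫ + ⟪x₂ - b, b - a⟫ := by
      simp only [inner_sub_left, inner_sub_right]
      rw [real_inner_comm x₁ a, real_inner_comm x₁ b, real_inner_comm x₂ a,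
        real_inner_comm x₂ b, real_inner_comm b a]
      ring
    have h2' : 0 ≤ ⟪x₂ - b, b - a⟫ := by
      have : ⟪x₂ - b, b - a⟫ = -⟪x₂ - b, a - b⟫ := by
        rw [← inner_neg_right]; congr 1; abel
      linarith [this ▸ (neg_nonneg.mpr h2)]
    linarith
  have hcs : ⟪a - b, x₁ - x₂⟫ ≤ ‖a - b‖ * ‖x₁ - x₂‖ := real_inner_le_norm _ _
  rw [real_inner_self_eq_norm_sq] at key
  rcases eq_or_lt_of_le (norm_nonneg (a - b)) with h0 | h0
  · rw [← h0]; exact norm_nonneg _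
  · nlinarith

private lemma radial_radius_lip {E : Type*} [NormedAddCommGroup E] [InnerProductSpace ℝ E]
    (r₁ r₂ : ℝ) (hr₁ : 0 ≤ r₁) (hr₂ : 0 ≤ r₂) (x : E) :
    ‖(if ‖x‖ ≤ r₁ then x else (r₁ / ‖x‖) • x) -
      (if ‖x‖ ≤ r₂ then x else (r₂ / ‖x‖) • x)‖ ≤ |r₁ - r₂| := by
  split_ifs with h1 h2 h2
  · simp [abs_nonneg]
  · push_neg at h2
    have hx : (0:ℝ) < ‖x‖ := lt_of_le_of_lt hr₂ h2
    have : x - (r₂ / ‖x‖) • x = (1 - r₂ / ‖x‖) • x := by rw [sub_smul, one_smul]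
    rw [this, norm_smul, Real.norm_eq_abs]
    have hc : r₂ / ‖x‖ ≤ 1 := by rw [div_le_one hx]; exact h2.le
    rw [abs_of_nonneg (by linarith)]
    have : (1 - r₂ / ‖x‖) * ‖x‖ = ‖x‖ - r₂ := by field_simp
    rw [this]
    have : ‖x‖ - r₂ ≤ r₁ - r₂ := by linarith
    exact le_trans this (le_abs_self _)
  · push_neg at h1
    have hx : (0:ℝ) < ‖x‖ := lt_of_le_of_lt hr₁ h1
    have : (r₁ / ‖x‖) • x - x = -((1 - r₁ / ‖x‖) • x) := by
      rw [sub_smul, one_smul]; abel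
    rw [this, norm_neg, norm_smul, Real.norm_eq_abs]
    have hc : r₁ / ‖x‖ ≤ 1 := by rw [div_le_one hx]; exact h1.le
    rw [abs_of_nonneg (by linarith)]
    have : (1 - r₁ / ‖x‖) * ‖x‖ = ‖x‖ - r₁ := by field_simp
    rw [this]
    have h' : ‖x‖ - r₁ ≤ r₂ - r₁ := by linarith
    calc ‖x‖ - r₁ ≤ r₂ - r₁ := h'
      _ = -(r₁ - r₂) := by ring
      _ ≤ |r₁ - r₂| := neg_le_abs _
  · push_neg at h1
    have hx : (0:ℝ) < ‖x‖ := lt_of_le_of_lt hr₁ h1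
    rw [← sub_smul, norm_smul, Real.norm_eq_abs]
    have : r₁ / ‖x‖ - r₂ / ‖x‖ = (r₁ - r₂) / ‖x‖ := by ring
    rw [this, abs_div, abs_of_pos hx, div_mul_cancel₀ _ hx.ne']

/-- **Key estimate in Lemma 2.** The radial projection onto the closed ball of radius `r`
centered at the origin of a real inner product space is jointly Lipschitz in the radius
and the point: `‖p(r₁,x₁) − p(r₂,x₂)‖ ≤ |r₁ − r₂| + ‖x₁ − x₂‖`. -/
theorem radial_projection_joint_lipschitz {E : Type*}
    [NormedAddCommGroup E] [InnerProductSpace ℝ E]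
    (p : ℝ → E → E)
    (hp : ∀ r x, p r x = if ‖x‖ ≤ r then x else (r / ‖x‖) • x)
    (r₁ r₂ : ℝ) (hr₁ : 0 ≤ r₁) (hr₂ : 0 ≤ r₂) (x₁ x₂ : E) :
    ‖p r₁ x₁ - p r₂ x₂‖ ≤ |r₁ - r₂| + ‖x₁ - x₂‖ := by
  have tri : ‖p r₁ x₁ - p r₂ x₂‖ ≤ ‖p r₁ x₁ - p r₂ x₁‖ + ‖p r₂ x₁ - p r₂ x₂‖ :=
    norm_sub_le_norm_sub_add_norm_sub _ _ _
  have h1 : ‖p r₁ x₁ - p r₂ x₁‖ ≤ |r₁ - r₂| := by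
    rw [hp, hp]; exact radial_radius_lip r₁ r₂ hr₁ hr₂ x₁
  have h2 : ‖p r₂ x₁ - p r₂ x₂‖ ≤ ‖x₁ - x₂‖ := by
    rw [hp, hp]; exact radial_nonexp r₂ hr₂ x₁ x₂
  linarith
end

section
/- Let H be a real Hilbert space, C ⊆ H a nonempty closed convex set with metric projection Π: H → C, w > 0, φ ∈ H, and R: H → H a surjective linear isometry. Define F: H × H → H × H by F(vᵢ, vⱼ) = (vᵢ + w·R⁻¹λ, vⱼ − w·R⁻¹λ) where λ = Π(−(2w)⁻¹(R(vᵢ − vⱼ) + φ)). Then F is nonexpansive with respect to the product norm: for all (vᵢ¹, vⱼ¹), (vᵢ², vⱼ²) ∈ H × H, ‖F(vᵢ¹, vⱼ¹)₁ − F(vᵢ², vⱼ²)₁‖² + ‖F(vᵢ¹, vⱼ¹)₂ − F(vᵢ², vⱼ²)₂‖² ≤ ‖vᵢ¹ − vᵢ²‖² + ‖vⱼ¹ − vⱼ²‖². -/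
local notation "⟪" x ", " y "⟫" => @inner ℝ _ _ x y

/-- Variational inequality for a metric projection onto a convex set. -/
private lemma proj_var_ineq {H : Type*}
    [NormedAddCommGroup H] [InnerProductSpace ℝ H]
    (C : Set H) (hne : C.Nonempty) (hconv : Convex ℝ C)
    (proj : H → H)
    (hproj : ∀ x, proj x ∈ C ∧ ∀ y ∈ C, ‖x - proj x‖ ≤ ‖x - y‖) :
    ∀ x : H, ∀ y ∈ C, ⟪x - proj x, y - proj x⟫ ≤ 0 := by
  haveI : Nonempty C := hne.to_subtype
  intro x
  rw [← norm_eq_iInf_iff_real_inner_le_zero hconv (hproj x).1]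
  refine le_antisymm (le_ciInf fun z => (hproj x).2 z z.2) ?_
  have hbdd : BddBelow (Set.range fun z : C => ‖x - (z : H)‖) :=
    ⟨0, by rintro _ ⟨z, rfl⟩; exact norm_nonneg _⟩
  exact ciInf_le hbdd ⟨proj x, (hproj x).1⟩

/-- Firm nonexpansiveness (monotonicity of projection residuals). -/
private lemma proj_firm {H : Type*}
    [NormedAddCommGroup H] [InnerProductSpace ℝ H]
    (C : Set H) (hne : C.Nonempty) (hconv : Convex ℝ C)
    (proj : H → H)
    (hproj : ∀ x, proj x ∈ C ∧ ∀ y ∈ C, ‖x - proj x‖ ≤ ‖x - y‖) :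
    ∀ x1 x2 : H, ‖proj x1 - proj x2‖ ^ 2 ≤ ⟪x1 - x2, proj x1 - proj x2⟫ := by
  intro x1 x2
  have h1 := proj_var_ineq C hne hconv proj hproj x1 (proj x2) (hproj x2).1
  have h2 := proj_var_ineq C hne hconv proj hproj x2 (proj x1) (hproj x1).1
  have hx : x1 - x2 = (x1 - proj x1) + (proj x1 - proj x2) + (proj x2 - x2) := by abel
  rw [hx, inner_add_left, inner_add_left, real_inner_self_eq_norm_sq]
  have e1 : ⟪x1 - proj x1, proj x1 - proj x2⟫ = -⟪x1 - proj x1, proj x2 - proj x1⟫ := by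
    rw [show proj x1 - proj x2 = -(proj x2 - proj x1) by abel, inner_neg_right]
  have e2 : ⟪proj x2 - x2, proj x1 - proj x2⟫ = -⟪x2 - proj x2, proj x1 - proj x2⟫ := by
    rw [show proj x2 - x2 = -(x2 - proj x2) by abel, inner_neg_left]
  rw [e1, e2]
  linarith

/-- **D-contact step of Theorem 2 (inequality (45)).** The proximal node–node contact
update, applying equal and opposite impulses `λ = Π(−(2w)⁻¹(R(vᵢ − vⱼ) + φ))` to the two
nodes, is nonexpansive for the product norm. -/
theorem d_contact_update_nonexpansive {H : Type*}
    [NormedAddCommGroup H] [InnerProductSpace ℝ H] [CompleteSpace H]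
    (C : Set H) (hne : C.Nonempty) (hcl : IsClosed C) (hconv : Convex ℝ C)
    (proj : H → H)
    (hproj : ∀ x, proj x ∈ C ∧ ∀ y ∈ C, ‖x - proj x‖ ≤ ‖x - y‖)
    (w : ℝ) (hw : 0 < w) (φ : H) (R : H ≃ₗᵢ[ℝ] H)
    (F : H × H → H × H)
    (hF : ∀ vi vj, F (vi, vj) =
      (vi + w • R.symm (proj (-(2 * w)⁻¹ • (R (vi - vj) + φ))),
       vj - w • R.symm (proj (-(2 * w)⁻¹ • (R (vi - vj) + φ))))) :
    ∀ p q : H × H,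
      ‖(F p).1 - (F q).1‖ ^ 2 + ‖(F p).2 - (F q).2‖ ^ 2 ≤
        ‖p.1 - q.1‖ ^ 2 + ‖p.2 - q.2‖ ^ 2 := by
  rintro ⟨vi1, vj1⟩ ⟨vi2, vj2⟩
  rw [hF vi1 vj1, hF vi2 vj2]
  dsimp only
  set x1 : H := -(2 * w)⁻¹ • (R (vi1 - vj1) + φ) with hx1
  set x2 : H := -(2 * w)⁻¹ • (R (vi2 - vj2) + φ) with hx2
  set a : H := vi1 - vi2 with ha
  set b : H := vj1 - vj2 with hb
  set Δ : H := proj x1 - proj x2 with hΔ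
  set d : H := w • R.symm Δ with hd
  have e1 : vi1 + w • R.symm (proj x1) - (vi2 + w • R.symm (proj x2)) = a + d := by
    rw [hd, hΔ, map_sub, smul_sub, ha]; abel
  have e2 : vj1 - w • R.symm (proj x1) - (vj2 - w • R.symm (proj x2)) = b - d := by
    rw [hd, hΔ, map_sub, smul_sub, hb]; abel
  rw [e1, e2]
  have hA : ‖a + d‖ ^ 2 = ‖a‖ ^ 2 + 2 * ⟪a, d⟫ + ‖d‖ ^ 2 := norm_add_sq_real a d
  have hB : ‖b - d‖ ^ 2 = ‖b‖ ^ 2 - 2 * ⟪b, d⟫ + ‖d‖ ^ 2 := norm_sub_sq_real b d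
  -- relation between x1 - x2 and R (a - b)
  have hx : x1 - x2 = -(2 * w)⁻¹ • R (a - b) := by
    rw [hx1, hx2, ← smul_sub]
    congr 1
    simp only [map_sub, ha, hb]
    abel
  set s : ℝ := ⟪x1 - x2, Δ⟫ with hs
  have hfirm : ‖Δ‖ ^ 2 ≤ s := proj_firm C hne hconv proj hproj x1 x2
  -- compute ⟪a - b, d⟫
  have hinner : ⟪a - b, d⟫ = w * ⟪R (a - b), Δ⟫ := by
    rw [hd, real_inner_smul_right]
    congr 1
    rw [← LinearIsometryEquiv.inner_map_map R (a - b) (R.symm Δ),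
      LinearIsometryEquiv.apply_symm_apply]
  have ht : ⟪R (a - b), Δ⟫ = -(2 * w) * s := by
    have h2w : (2 * w) ≠ 0 := by positivity
    have hts : s = -(2 * w)⁻¹ * ⟪R (a - b), Δ⟫ := by
      rw [hs, hx, real_inner_smul_left]
    rw [hts]
    field_simp
  have hZ : ⟪a - b, d⟫ = -(2 * w ^ 2) * s := by rw [hinner, ht]; ring
  have habd : ⟪a, d⟫ - ⟪b, d⟫ = ⟪a - b, d⟫ := (inner_sub_left a b d).symm
  have hnd : ‖d‖ = w * ‖Δ‖ := by
    rw [hd, norm_smul, Real.norm_eq_abs, abs_of_pos hw, LinearIsometryEquiv.norm_map]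
  have hnd2 : ‖d‖ ^ 2 = w ^ 2 * ‖Δ‖ ^ 2 := by rw [hnd]; ring
  have hfirm4 : 4 * (w ^ 2 * ‖Δ‖ ^ 2) ≤ 4 * (w ^ 2 * s) := by nlinarith [sq_nonneg w]
  have hQ : (0:ℝ) ≤ w ^ 2 * ‖Δ‖ ^ 2 := by positivity
  rw [hA, hB]
  nlinarith [hZ, habd, hnd2, hfirm4, hQ]
end
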